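/- There exists an integer n₀ such that for all n ≥ n₀ the following holds: if F and G are nonempty families of subsets of [n] such that there is no pair F ∈ F, G ∈ G with F ⊊ G or G ⊊ F (strict containment forbidden, common members allowed), then |F| + |G| ≤ 2^n − 2^⌈n/2⌉ − 2^⌊n/2⌋ + 3. -/

import Mathlib

/-- The weak cross-Sperner property: no pair `F ∈ 𝓕`, `G ∈ 𝓖` with
`F ⊊ G` or `G ⊊ F` (common members of `𝓕` and `𝓖` are allowed). -/
def WeakCrossSperner (𝓕 𝓖 : Finset (Finset ℕ)) : Prop :=
  ∀ F ∈ 𝓕, ∀ G ∈ 𝓖, ¬ F ⊂ G ∧ ¬ G ⊂ F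

/-!
Write `u = 2^⌊n/2⌋`, `v = 2^⌈n/2⌉` and `N = 2^n = u v`. If `𝓕` and `𝓖` share members, then
`T = 𝓕 ∩ 𝓖` is an antichain, and every set strictly below or above a member of `T` lies outside
`𝓕 ∪ 𝓖`; so the down- and up-closures `D`, `U` of `T` (which meet exactly in `T`) give
`|𝓕| + |𝓖| ≤ N + 3|T| - |D| - |U|`. By Harris–Kleitman `|T| N ≤ |D| |U|`, by Sperner `3|T| ≤ N`, and
`|D| + |U| ≥ u + v` by convexity of `2^x`; AM–GM then yields `|D| + |U| + 3 ≥ 3|T| + u + v`.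
If `𝓕` and `𝓖` are disjoint and `|𝓕| ≥ 2`, the same count with the closures of `𝓕` itself, meeting
in `R ⊇ 𝓕`, gives `|𝓕| + |𝓖| ≤ N + |R| + |𝓕| - |D| - |U|`, and Harris–Kleitman with AM–GM again
gives `|D| + |U| + 3 ≥ 2|R| + u + v` once `|R| ≤ N + 1 - u - v`; the latter holds because `R` avoids
the at least `u + v - 1` sets comparable with a member of `𝓖`. A single-member `𝓕 = {F}` is
absorbed into `𝓖` to reach the first case.
-/

open Finset

section Arithmetic

lemma pow_add_pow_le_pow_add_pow {c a k l : ℕ} (hc : 1 ≤ c) (hak : a ≤ k) (hkl : k ≤ l) :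
    c ^ k + c ^ l ≤ c ^ a + c ^ (l + k - a) := by
  obtain ⟨i, rfl⟩ := Nat.exists_eq_add_of_le hak
  rw [show l + (a + i) - a = l + i by omega, pow_add, pow_add]
  have hal : c ^ a ≤ c ^ l := Nat.pow_le_pow_right hc (by omega)
  have hi : 1 ≤ c ^ i := Nat.one_le_pow _ _ hc
  nlinarith [Nat.mul_le_mul (Nat.sub_le_sub_right hal (c ^ a)) (Nat.sub_le_sub_right hi 1)]

lemma pow_succ_div_two_add_pow_div_two_le {c m a b : ℕ} (hc : 1 ≤ c) (hab : m ≤ a + b) :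
    c ^ ((m + 1) / 2) + c ^ (m / 2) ≤ c ^ a + c ^ b := by
  wlog hba : a ≤ b generalizing a b
  · rw [add_comm (c ^ a)]
    exact this (by omega) (by omega)
  by_cases hka : m / 2 ≤ a
  · rw [add_comm (c ^ _)]
    exact add_le_add (Nat.pow_le_pow_right hc hka) (Nat.pow_le_pow_right hc (by omega))
  calc c ^ ((m + 1) / 2) + c ^ (m / 2) = c ^ (m / 2) + c ^ ((m + 1) / 2) := add_comm _ _
    _ ≤ c ^ a + c ^ ((m + 1) / 2 + m / 2 - a) :=
      pow_add_pow_le_pow_add_pow hc (by omega) (by omega)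
    _ ≤ c ^ a + c ^ b := Nat.add_le_add_left (Nat.pow_le_pow_right hc (by omega)) _

lemma two_pow_div_two_bounds {d : ℕ} (hd : 10 ≤ d) :
    32 ≤ 2 ^ (d / 2) ∧ 2 ^ (d / 2) ≤ 2 ^ ((d + 1) / 2) ∧ 2 ^ ((d + 1) / 2) ≤ 2 * 2 ^ (d / 2) ∧
      2 ^ (d / 2) * 2 ^ ((d + 1) / 2) = 2 ^ d := by
  refine ⟨?_, Nat.pow_le_pow_right two_pos (by omega), ?_, ?_⟩
  · exact (Nat.pow_le_pow_right two_pos (by omega : 5 ≤ d / 2)).trans' (by norm_num)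
  · rw [← pow_succ']
    exact Nat.pow_le_pow_right two_pos (by omega)
  · rw [← pow_add]
    congr 1
    omega

lemma three_mul_centralBinom_le_four_pow {m : ℕ} (hm : 3 ≤ m) : 3 * m.centralBinom ≤ 4 ^ m := by
  induction m, hm using Nat.le_induction with
  | base => decide
  | succ m _ ih =>
    have hstep : (m + 1) * (m + 1).centralBinom ≤ (m + 1) * (4 * m.centralBinom) := by
      rw [Nat.succ_mul_centralBinom_succ]
      nlinarith
    have := Nat.le_of_mul_le_mul_left hstep m.succ_pos
    rw [pow_succ]
    omega

lemma three_mul_choose_half_le_two_pow {d : ℕ} (hd : 5 ≤ d) : 3 * d.choose (d / 2) ≤ 2 ^ d := by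
  obtain ⟨m, rfl | rfl⟩ := Nat.even_or_odd' d
  · rw [Nat.mul_div_cancel_left m two_pos, ← Nat.centralBinom_eq_two_mul_choose, pow_mul]
    exact three_mul_centralBinom_le_four_pow (by omega)
  · have hcb : (m + 1).centralBinom = 2 * (2 * m + 1).choose m := by
      rw [Nat.centralBinom_eq_two_mul_choose, show 2 * (m + 1) = 2 * m + 1 + 1 by ring,
        Nat.choose_succ_succ, Nat.choose_symm_half]
      omega
    have := three_mul_centralBinom_le_four_pow (m := m + 1) (by omega)
    rw [hcb, pow_succ] at this
    rw [show (2 * m + 1) / 2 = m by omega, pow_succ, pow_mul]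
    norm_num
    omega

lemma le_add_of_sq_le_four_mul {x p q : ℕ} (h : x ^ 2 ≤ 4 * (p * q)) : x ≤ p + q :=
  (Nat.pow_le_pow_iff_left two_ne_zero).1 <| h.trans <| by nlinarith [four_mul_le_sq_add p q]

lemma two_mul_sq_add_le_nine_mul {u v : ℕ} (huv : u ≤ v) (hvu : v ≤ 2 * u) :
    2 * (u + v) ^ 2 ≤ 9 * (u * v) := by
  nlinarith [Nat.mul_le_mul (Nat.sub_le_sub_right hvu u) (Nat.sub_le_sub_left huv v)]

lemma three_mul_add_le_add_of_le_mul {t p q u v : ℕ} (hu : 32 ≤ u) (huv : u ≤ v)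
    (hvu : v ≤ 2 * u) (ht : 1 ≤ t) (htN : 3 * t ≤ u * v) (hpq : t * (u * v) ≤ p * q)
    (hconv : u + v ≤ p + q) : 3 * t + u + v ≤ p + q + 3 := by
  obtain rfl | ht2 := ht.eq_or_lt
  · omega
  have hsq := two_mul_sq_add_le_nine_mul huv hvu
  suffices (3 * t + (u + v - 3)) ^ 2 ≤ 4 * (p * q) by
    have := le_add_of_sq_le_four_mul this
    omega
  zify [show 3 ≤ u + v by omega] at *
  -- `t ↦ 4tuv - (3t + u + v - 3)²` is concave, and nonnegative at `t = 2` and at `3t = uv`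
  nlinarith [mul_nonneg (show (0 : ℤ) ≤ t - 2 by omega) (show (0 : ℤ) ≤ u * v - 3 * t by omega),
    mul_nonneg (show (0 : ℤ) ≤ t - 2 by omega) (show (0 : ℤ) ≤ u * v - 6 * (u + v) by nlinarith)]

lemma two_mul_add_le_add_of_le_mul {r p q u v : ℕ} (hu : 32 ≤ u) (huv : u ≤ v)
    (hvu : v ≤ 2 * u) (hr : 2 ≤ r) (hrN : r + u + v ≤ u * v + 1) (hpq : r * (u * v) ≤ p * q) :
    2 * r + u + v ≤ p + q + 3 := by
  have hsq := two_mul_sq_add_le_nine_mul huv hvu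
  suffices (2 * r + (u + v - 3)) ^ 2 ≤ 4 * (p * q) by
    have := le_add_of_sq_le_four_mul this
    omega
  zify [show 3 ≤ u + v by omega] at *
  -- `r ↦ 4ruv - (2r + u + v - 3)²` is concave, and nonnegative at `r = 2` and at `r + u + v = uv + 1`
  nlinarith [mul_nonneg (show (0 : ℤ) ≤ r - 2 by omega)
    (show (0 : ℤ) ≤ u * v + 1 - u - v - r by omega)]

end Arithmetic

def IsWeakCrossSperner {α : Type*} (𝓕 𝓖 : Finset (Finset α)) : Prop :=
  ∀ F ∈ 𝓕, ∀ G ∈ 𝓖, ¬ F ⊂ G ∧ ¬ G ⊂ F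

namespace IsWeakCrossSperner

variable {α : Type*} {𝓕 𝓖 𝓐 : Finset (Finset α)}

lemma symm (h : IsWeakCrossSperner 𝓕 𝓖) : IsWeakCrossSperner 𝓖 𝓕 :=
  fun G hG F hF => (h F hF G hG).symm

lemma mono_right (h : IsWeakCrossSperner 𝓕 𝓖) (h𝓐 : 𝓐 ⊆ 𝓖) : IsWeakCrossSperner 𝓕 𝓐 :=
  fun F hF A hA => h F hF A (h𝓐 hA)

lemma isAntichain_inter [DecidableEq α] (h : IsWeakCrossSperner 𝓕 𝓖) :
    IsAntichain (· ⊆ ·) ((𝓕 ∩ 𝓖 : Finset (Finset α)) : Set (Finset α)) := by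
  intro X hX Y hY hne hXY
  simp only [coe_inter, Set.mem_inter_iff, mem_coe] at hX hY
  exact (h X hX.1 Y hY.2).1 (ssubset_of_subset_of_ne hXY hne)

end IsWeakCrossSperner

section Closure

variable {α : Type*} [DecidableEq α] [Fintype α] {𝓐 𝓕 𝓖 : Finset (Finset α)} {A : Finset α}

def downClosure (𝓐 : Finset (Finset α)) : Finset (Finset α) := {X | ∃ A ∈ 𝓐, X ⊆ A}

def upClosure (𝓐 : Finset (Finset α)) : Finset (Finset α) := {X | ∃ A ∈ 𝓐, A ⊆ X}

@[simp]
lemma mem_downClosure {X : Finset α} : X ∈ downClosure 𝓐 ↔ ∃ A ∈ 𝓐, X ⊆ A := by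
  simp [downClosure]

@[simp]
lemma mem_upClosure {X : Finset α} : X ∈ upClosure 𝓐 ↔ ∃ A ∈ 𝓐, A ⊆ X := by
  simp [upClosure]

lemma subset_downClosure : 𝓐 ⊆ downClosure 𝓐 := fun A hA => mem_downClosure.2 ⟨A, hA, le_rfl⟩

lemma subset_upClosure : 𝓐 ⊆ upClosure 𝓐 := fun A hA => mem_upClosure.2 ⟨A, hA, le_rfl⟩

lemma card_inter_mul_le_card_downClosure_mul_card_upClosure :
    #(downClosure 𝓐 ∩ upClosure 𝓐) * 2 ^ Fintype.card α ≤ #(downClosure 𝓐) * #(upClosure 𝓐) :=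
  mul_comm (2 ^ Fintype.card α) _ ▸ IsLowerSet.card_inter_le_finset
    (fun _ _ hYX hX => by
      obtain ⟨A, hA, hXA⟩ := mem_downClosure.1 hX
      exact mem_downClosure.2 ⟨A, hA, hYX.trans hXA⟩)
    (fun _ _ hXY hX => by
      obtain ⟨A, hA, hAX⟩ := mem_upClosure.1 hX
      exact mem_upClosure.2 ⟨A, hA, hAX.trans hXY⟩)

lemma two_pow_card_le_card_downClosure (hA : A ∈ 𝓐) : 2 ^ #A ≤ #(downClosure 𝓐) := by
  rw [← card_powerset]
  exact card_le_card fun X hX => mem_downClosure.2 ⟨A, hA, mem_powerset.1 hX⟩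

lemma two_pow_card_compl_le_card_upClosure (hA : A ∈ 𝓐) :
    2 ^ (Fintype.card α - #A) ≤ #(upClosure 𝓐) := by
  rw [← card_compl, ← card_powerset]
  refine card_le_card_of_injOn compl (fun X hX => ?_) compl_injective.injOn
  exact mem_upClosure.2 ⟨A, hA, subset_compl_comm.1 (mem_powerset.1 hX)⟩

lemma downClosure_inter_upClosure_of_isAntichain (h : IsAntichain (· ⊆ ·) (𝓐 : Set (Finset α))) :
    downClosure 𝓐 ∩ upClosure 𝓐 = 𝓐 := by
  refine (Finset.subset_inter subset_downClosure subset_upClosure).antisymm' fun X hX => ?_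
  obtain ⟨⟨A, hA, hXA⟩, ⟨B, hB, hBX⟩⟩ := mem_inter.1 hX |>.imp mem_downClosure.1 mem_upClosure.1
  obtain rfl : B = A := h.eq hB hA (hBX.trans hXA)
  rwa [hXA.antisymm hBX]

lemma disjoint_sdiff_of_isWeakCrossSperner (h : IsWeakCrossSperner 𝓕 𝓖) (h𝓐 : 𝓐 ⊆ 𝓕) :
    Disjoint ((downClosure 𝓐 ∪ upClosure 𝓐) \ 𝓐) 𝓖 := by
  refine disjoint_left.2 fun X hX hXG => ?_
  obtain ⟨hX, hX𝓐⟩ := mem_sdiff.1 hX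
  rcases mem_union.1 hX with hX | hX
  · obtain ⟨A, hA, hXA⟩ := mem_downClosure.1 hX
    exact (h A (h𝓐 hA) X hXG).2 (ssubset_of_subset_of_ne hXA (by rintro rfl; exact hX𝓐 hA))
  · obtain ⟨A, hA, hAX⟩ := mem_upClosure.1 hX
    exact (h A (h𝓐 hA) X hXG).1 (ssubset_of_subset_of_ne hAX (by rintro rfl; exact hX𝓐 hA))

lemma card_add_card_le_two_pow_of_disjoint {𝓧 𝓨 : Finset (Finset α)} (h : Disjoint 𝓧 𝓨) :
    #𝓧 + #𝓨 ≤ 2 ^ Fintype.card α := by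
  rw [← card_union_of_disjoint h, ← Fintype.card_finset]
  exact card_le_univ _

lemma card_add_card_downClosure_add_card_upClosure_le {𝓧 : Finset (Finset α)}
    (h : Disjoint 𝓧 ((downClosure 𝓐 ∪ upClosure 𝓐) \ 𝓐)) :
    #𝓧 + #(downClosure 𝓐) + #(upClosure 𝓐) ≤
      2 ^ Fintype.card α + #𝓐 + #(downClosure 𝓐 ∩ upClosure 𝓐) := by
  have := card_add_card_le_two_pow_of_disjoint h
  have := card_sdiff_add_card_eq_card ((subset_downClosure (𝓐 := 𝓐)).trans
    (subset_union_left (s₂ := upClosure 𝓐)))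
  have := card_union_add_card_inter (downClosure 𝓐) (upClosure 𝓐)
  omega

lemma card_add_two_pow_le_card_union_downClosure_upClosure :
    2 ^ #A + 2 ^ (Fintype.card α - #A) ≤ #(downClosure {A} ∪ upClosure {A}) + 1 := by
  have := card_union_add_card_inter (downClosure {A}) (upClosure {A})
  rw [downClosure_inter_upClosure_of_isAntichain (by simp), card_singleton] at this
  have := two_pow_card_le_card_downClosure (mem_singleton_self A)
  have := two_pow_card_compl_le_card_upClosure (mem_singleton_self A)
  omega

lemma disjoint_downClosure_inter_upClosure (hA : A ∉ 𝓐) (h : IsWeakCrossSperner 𝓐 {A}) :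
    Disjoint (downClosure 𝓐 ∩ upClosure 𝓐) (downClosure {A} ∪ upClosure {A}) := by
  refine disjoint_left.2 fun X hX hXA => ?_
  obtain ⟨⟨C, hC, hXC⟩, ⟨B, hB, hBX⟩⟩ := mem_inter.1 hX |>.imp mem_downClosure.1 mem_upClosure.1
  rcases mem_union.1 hXA with hXA | hXA <;> simp only [mem_downClosure, mem_upClosure,
    mem_singleton, exists_eq_left] at hXA
  · exact (h B hB A (mem_singleton_self A)).1
      (ssubset_of_subset_of_ne (hBX.trans hXA) (by rintro rfl; exact hA hB))
  · exact (h C hC A (mem_singleton_self A)).2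
      (ssubset_of_subset_of_ne (hXA.trans hXC) (by rintro rfl; exact hA hC))

end Closure

section Cases

variable {α : Type*} [DecidableEq α] [Fintype α] {𝓕 𝓖 : Finset (Finset α)}

lemma card_add_card_add_two_pow_le_of_inter_nonempty (hd : 10 ≤ Fintype.card α)
    (h : IsWeakCrossSperner 𝓕 𝓖) (hT : (𝓕 ∩ 𝓖).Nonempty) :
    #𝓕 + #𝓖 + 2 ^ ((Fintype.card α + 1) / 2) + 2 ^ (Fintype.card α / 2) ≤
      2 ^ Fintype.card α + 3 := by
  obtain ⟨hu, huv, hvu, hN⟩ := two_pow_div_two_bounds hd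
  have hanti := h.isAntichain_inter
  have hkleitman := card_inter_mul_le_card_downClosure_mul_card_upClosure (𝓐 := 𝓕 ∩ 𝓖)
  rw [downClosure_inter_upClosure_of_isAntichain hanti, ← hN] at hkleitman
  have hsperner : 3 * #(𝓕 ∩ 𝓖) ≤ 2 ^ Fintype.card α :=
    (Nat.mul_le_mul_left 3 hanti.sperner).trans (three_mul_choose_half_le_two_pow (by omega))
  obtain ⟨A, hA⟩ := hT
  have hconv := (pow_succ_div_two_add_pow_div_two_le one_le_two
    (by omega : Fintype.card α ≤ #A + (Fintype.card α - #A))).trans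
      (add_le_add (two_pow_card_le_card_downClosure hA) (two_pow_card_compl_le_card_upClosure hA))
  have harith := three_mul_add_le_add_of_le_mul hu huv hvu (card_pos.2 ⟨A, hA⟩) (hN ▸ hsperner)
    hkleitman (by omega)
  have hcount := card_add_card_downClosure_add_card_upClosure_le (𝓧 := 𝓕 ∪ 𝓖) (𝓐 := 𝓕 ∩ 𝓖)
    (disjoint_union_left.2 ⟨(disjoint_sdiff_of_isWeakCrossSperner h.symm inter_subset_right).symm,
      (disjoint_sdiff_of_isWeakCrossSperner h inter_subset_left).symm⟩)
  rw [downClosure_inter_upClosure_of_isAntichain hanti] at hcount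
  have := card_union_add_card_inter 𝓕 𝓖
  omega

lemma card_add_card_add_two_pow_le_of_disjoint (hd : 10 ≤ Fintype.card α)
    (h : IsWeakCrossSperner 𝓕 𝓖) (hdisj : Disjoint 𝓕 𝓖) (h𝓕 : 2 ≤ #𝓕) (h𝓖 : 𝓖.Nonempty) :
    #𝓕 + #𝓖 + 2 ^ ((Fintype.card α + 1) / 2) + 2 ^ (Fintype.card α / 2) ≤
      2 ^ Fintype.card α + 3 := by
  obtain ⟨hu, huv, hvu, hN⟩ := two_pow_div_two_bounds hd
  have hfr : #𝓕 ≤ #(downClosure 𝓕 ∩ upClosure 𝓕) :=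
    card_le_card (subset_inter subset_downClosure subset_upClosure)
  have hkleitman := card_inter_mul_le_card_downClosure_mul_card_upClosure (𝓐 := 𝓕)
  rw [← hN] at hkleitman
  obtain ⟨G, hG⟩ := h𝓖
  have hRdisj := card_add_card_le_two_pow_of_disjoint (disjoint_downClosure_inter_upClosure
    (disjoint_right.1 hdisj hG) (h.mono_right (singleton_subset_iff.2 hG)))
  have hcomparable := card_add_two_pow_le_card_union_downClosure_upClosure (A := G)
  have hconv := pow_succ_div_two_add_pow_div_two_le one_le_two
    (by omega : Fintype.card α ≤ #G + (Fintype.card α - #G))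
  have harith := two_mul_add_le_add_of_le_mul hu huv hvu (by omega) (by omega) hkleitman
  have hcount := card_add_card_downClosure_add_card_upClosure_le (𝓧 := 𝓕 ∪ 𝓖) (𝓐 := 𝓕)
    (disjoint_union_left.2 ⟨disjoint_sdiff,
      (disjoint_sdiff_of_isWeakCrossSperner h subset_rfl).symm⟩)
  rw [card_union_of_disjoint hdisj] at hcount
  omega

theorem card_add_card_add_two_pow_le (hd : 10 ≤ Fintype.card α) (h : IsWeakCrossSperner 𝓕 𝓖)
    (h𝓕 : 𝓕.Nonempty) (h𝓖 : 𝓖.Nonempty) :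
    #𝓕 + #𝓖 + 2 ^ ((Fintype.card α + 1) / 2) + 2 ^ (Fintype.card α / 2) ≤
      2 ^ Fintype.card α + 3 := by
  by_cases hT : (𝓕 ∩ 𝓖).Nonempty
  · exact card_add_card_add_two_pow_le_of_inter_nonempty hd h hT
  have hdisj : Disjoint 𝓕 𝓖 := disjoint_iff_inter_eq_empty.2 (not_nonempty_iff_eq_empty.1 hT)
  obtain h1 | h2 := (one_le_card.2 h𝓕).eq_or_lt
  · obtain ⟨F, rfl⟩ := card_eq_one.1 h1.symm
    have h' : IsWeakCrossSperner {F} (insert F 𝓖) := by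
      rintro _ hF G hG
      obtain rfl := mem_singleton.1 hF
      obtain rfl | hG := mem_insert.1 hG
      · exact ⟨ssubset_irrefl _, ssubset_irrefl _⟩
      · exact h _ hF G hG
    have := card_add_card_add_two_pow_le_of_inter_nonempty hd h' ⟨F, by simp⟩
    have := card_le_card (subset_insert F 𝓖)
    omega
  · exact card_add_card_add_two_pow_le_of_disjoint hd h hdisj h2 h𝓖

end Cases

section Subtype

variable {β : Type*} [DecidableEq β] {s : Finset β}

lemma subtype_ssubset_subtype_iff {F G : Finset β} (hF : F ⊆ s) (hG : G ⊆ s) :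
    F.subtype (· ∈ s) ⊂ G.subtype (· ∈ s) ↔ F ⊂ G := by
  rw [← map_ssubset_map (f := Function.Embedding.subtype (· ∈ s)), subtype_map_of_mem hF,
    subtype_map_of_mem hG]

lemma injOn_subtype :
    Set.InjOn (fun F : Finset β => F.subtype (· ∈ s)) (s.powerset : Set (Finset β)) := by
  intro F hF G hG hFG
  rw [← subtype_map_of_mem (mem_powerset.1 hF), ← subtype_map_of_mem (mem_powerset.1 hG)]
  exact congrArg (map _) hFG

lemma IsWeakCrossSperner.image_subtype {𝓕 𝓖 : Finset (Finset β)} (h𝓕 : 𝓕 ⊆ s.powerset)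
    (h𝓖 : 𝓖 ⊆ s.powerset) (h : IsWeakCrossSperner 𝓕 𝓖) :
    IsWeakCrossSperner (𝓕.image (·.subtype (· ∈ s))) (𝓖.image (·.subtype (· ∈ s))) := by
  simp only [IsWeakCrossSperner, mem_image, forall_exists_index, and_imp, forall_apply_eq_imp_iff₂]
  intro F hF G hG
  have hFs := mem_powerset.1 (h𝓕 hF)
  have hGs := mem_powerset.1 (h𝓖 hG)
  rw [subtype_ssubset_subtype_iff hFs hGs, subtype_ssubset_subtype_iff hGs hFs]
  exact h F hF G hG

end Subtype

theorem weak_cross_sperner_sum_bound :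
    ∃ n₀ : ℕ, ∀ n : ℕ, n₀ ≤ n →
      ∀ 𝓕 𝓖 : Finset (Finset ℕ),
        𝓕 ⊆ (Finset.Icc 1 n).powerset → 𝓖 ⊆ (Finset.Icc 1 n).powerset →
        𝓕.Nonempty → 𝓖.Nonempty → WeakCrossSperner 𝓕 𝓖 →
        𝓕.card + 𝓖.card ≤ 2 ^ n - 2 ^ ((n + 1) / 2) - 2 ^ (n / 2) + 3 := by
  refine ⟨10, fun n hn 𝓕 𝓖 h𝓕 h𝓖 h𝓕ne h𝓖ne h => ?_⟩
  have hcard : Fintype.card (Icc 1 n) = n := by simp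
  have := card_add_card_add_two_pow_le (α := Icc 1 n) (by rw [hcard]; exact hn)
    (IsWeakCrossSperner.image_subtype h𝓕 h𝓖 h) (h𝓕ne.image _) (h𝓖ne.image _)
  rw [hcard, card_image_of_injOn (injOn_subtype.mono (coe_subset.2 h𝓕)),
    card_image_of_injOn (injOn_subtype.mono (coe_subset.2 h𝓖))] at this
  omega
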